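/- For l ∈ [1,c-1], write l = Σ_{i=1}^{k_l} j_i^{(l)}·s_i(a) with { j_i^{(l)} } the unique a-reduced family, and set x_l = Σ_{i=1}^{k_l} j_i^{(l)}·t_i(a,b,c) (x_0 = 0). Then x_l = min{ x ∈ G_{a,b}(c) : x ≡ b·l (mod c) }. -/

import Mathlib

/-
Every element of `G_{a,b}(c)` is a sum `∑_{κ ∈ M} t_κ` over a multiset `M` of indices, and such a
sum equals `c · ∑ a^κ + b · ∑ s_κ`. Since `s_{p+1} = a s_p + 1`, replacing an index `p + 1` of `M`
by `a` copies of `p` keeps `∑ a^κ` and lowers `∑ s_κ` by one; as `∑ s_κ ≡ l (mod c)` and `l < c`,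
we may therefore assume `∑ s_κ = l` without increasing the sum. Because `a^κ = (a - 1) s_κ + 1`,
the sum is then `c ((a - 1) l + |M|) + b l`, so it remains to show that the `a`-reduced
representation of `l` uses the fewest summands `s_κ`. This goes by induction on its top index `k`:
the prefix sums of a reduced family satisfy `∑_{i ≤ k} j_i s_i < s_{k+1}`, so every index of `M` is
at most `k`, and any such `M` with `∑ s_κ ≥ s_k` can lose one summand while its value drops by `s_k`.
-/

/-- `sF a k = Σ_{i=0}^{k-1} a^i` (so `sF a 0 = 0`). -/
def sF (a k : ℕ) : ℕ := ∑ i ∈ Finset.range k, a ^ i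

/-- `tF a b c k = a^k * c + b * sF a k`. -/
def tF (a b c k : ℕ) : ℕ := a ^ k * c + b * sF a k

/-- A θ_{a,b}-semigroup: contains 0, closed under addition, and closed under
`x ↦ a*x + b` on nonzero elements. -/
def IsThetaSG (a b : ℕ) (S : Set ℕ) : Prop :=
  0 ∈ S ∧ (∀ x ∈ S, ∀ y ∈ S, x + y ∈ S) ∧ ∀ y ∈ S, y ≠ 0 → a * y + b ∈ S

/-- `Gset a b c` : the smallest θ_{a,b}-semigroup containing `c`. -/
def Gset (a b c : ℕ) : Set ℕ := ⋂₀ {S : Set ℕ | IsThetaSG a b S ∧ c ∈ S}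

/-- `Hmon a b c` : additive submonoid generated by the `tF a b c k`. -/
def Hmon (a b c : ℕ) : AddSubmonoid ℕ :=
  AddSubmonoid.closure {x | ∃ k, x = tF a b c k}

/-- `{j_i}_{i=1}^k` is `a`-reduced. -/
def AReduced (a k : ℕ) (j : ℕ → ℕ) : Prop :=
  (∀ i, 1 ≤ i → i ≤ k → j i ≤ a) ∧ j k ≠ 0 ∧
  ∀ m, 1 ≤ m → m ≤ k → j m = a → ∀ i, 1 ≤ i → i < m → j i = 0

open Finset Multiset

lemma sF_succ (a k : ℕ) : sF a (k + 1) = a * sF a k + 1 := by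
  simp [sF, Finset.sum_range_succ', pow_succ', Finset.mul_sum]

lemma sF_mono (a : ℕ) : Monotone (sF a) := fun _ _ h =>
  Finset.sum_le_sum_of_subset (Finset.range_subset_range.2 h)

lemma pow_eq_sub_one_mul_sF {a : ℕ} (ha : 0 < a) (k : ℕ) : a ^ k = (a - 1) * sF a k + 1 := by
  obtain ⟨x, rfl⟩ : ∃ x, a = x + 1 := ⟨a - 1, by omega⟩
  rw [← geom_sum_mul_add x k, sF, Nat.add_sub_cancel, mul_comm]

lemma tF_succ (a b c k : ℕ) : tF a b c (k + 1) = a * tF a b c k + b := by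
  simp only [tF, sF_succ, pow_succ]
  ring

lemma tF_pos {a : ℕ} (b : ℕ) {c : ℕ} (ha : 0 < a) (hc : 0 < c) (k : ℕ) : 0 < tF a b c k :=
  Nat.add_pos_left (by positivity) _

lemma sum_map_tF (a b c : ℕ) (M : Multiset ℕ) :
    (M.map (tF a b c)).sum = c * (M.map (a ^ ·)).sum + b * (M.map (sF a)).sum := by
  rw [← Multiset.sum_map_mul_left, ← Multiset.sum_map_mul_left, ← Multiset.sum_map_add]
  exact congrArg _ (Multiset.map_congr rfl fun k _ => by rw [tF, mul_comm])

lemma sum_map_pow {a : ℕ} (ha : 0 < a) (M : Multiset ℕ) :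
    (M.map (a ^ ·)).sum = (a - 1) * (M.map (sF a)).sum + card M := by
  rw [Multiset.map_congr rfl fun k _ => pow_eq_sub_one_mul_sF ha k, Multiset.sum_map_add,
    Multiset.sum_map_mul_left, Multiset.map_const', Multiset.sum_replicate, smul_eq_mul, mul_one]

lemma sum_mul_tF {a : ℕ} (b c : ℕ) (ha : 0 < a) (s : Finset ℕ) (j : ℕ → ℕ) :
    ∑ i ∈ s, j i * tF a b c i
      = c * ((a - 1) * ∑ i ∈ s, j i * sF a i + ∑ i ∈ s, j i) + b * ∑ i ∈ s, j i * sF a i := by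
  simp only [Finset.mul_sum, ← Finset.sum_add_distrib]
  refine Finset.sum_congr rfl fun i _ => ?_
  rw [tF, pow_eq_sub_one_mul_sF ha]
  ring

lemma exists_succ_mem_of_sum_sF_pos {a : ℕ} {M : Multiset ℕ} (h : 0 < (M.map (sF a)).sum) :
    ∃ p, p + 1 ∈ M := by
  by_contra! hM
  refine h.ne' (Multiset.sum_eq_zero fun y hy => ?_)
  obtain ⟨_ | p, hp, rfl⟩ := Multiset.mem_map.1 hy
  · simp [sF]
  · exact absurd hp (hM p)

def splitAt (a p : ℕ) (M : Multiset ℕ) : Multiset ℕ := M.erase (p + 1) + replicate a p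

section splitAt

variable {a p : ℕ} {M : Multiset ℕ}

lemma sum_map_splitAt {e : ℕ} {f : ℕ → ℕ} (hf : ∀ q, f (q + 1) = a * f q + e)
    (hp : p + 1 ∈ M) : ((splitAt a p M).map f).sum + e = (M.map f).sum := by
  rw [← Multiset.sum_map_erase hp, hf, splitAt, Multiset.map_add, Multiset.sum_add,
    Multiset.map_replicate, Multiset.sum_replicate, smul_eq_mul]
  ring

lemma card_splitAt (hp : p + 1 ∈ M) : card (splitAt a p M) + 1 = card M + a := by
  rw [splitAt, card_add, card_replicate, ← Multiset.card_erase_add_one hp]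
  ring

lemma le_of_mem_splitAt {κ : ℕ} (hM : ∀ x ∈ M, x ≤ κ) (hp : p + 1 ∈ M) :
    ∀ x ∈ splitAt a p M, x ≤ κ := by
  intro x hx
  rcases Multiset.mem_add.1 hx with hx | hx
  · exact hM x (Multiset.mem_of_mem_erase hx)
  · rw [Multiset.eq_of_mem_replicate hx]
    exact (hM _ hp).trans' p.le_succ

end splitAt

lemma exists_sum_map_sF_add_eq (a n : ℕ) {M : Multiset ℕ} (hn : n ≤ (M.map (sF a)).sum) :
    ∃ M' : Multiset ℕ, (M'.map (sF a)).sum + n = (M.map (sF a)).sum ∧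
      (M'.map (a ^ ·)).sum = (M.map (a ^ ·)).sum := by
  induction n with
  | zero => exact ⟨M, rfl, rfl⟩
  | succ n ih =>
    obtain ⟨M₁, hM₁, hpow⟩ := ih (by omega)
    obtain ⟨p, hp⟩ := exists_succ_mem_of_sum_sF_pos (show 0 < (M₁.map (sF a)).sum by omega)
    have hs := sum_map_splitAt (sF_succ a) hp
    refine ⟨splitAt a p M₁, by omega, ?_⟩
    rw [← hpow, ← sum_map_splitAt (e := 0) (fun q => pow_succ' a q) hp, add_zero]

lemma exists_sum_map_sF_add_sF_eq (a κ : ℕ) {M : Multiset ℕ} (hM : ∀ x ∈ M, x ≤ κ + 1)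
    (hle : sF a (κ + 1) ≤ (M.map (sF a)).sum) : ∃ M' : Multiset ℕ, (∀ x ∈ M', x ≤ κ + 1) ∧
      (M'.map (sF a)).sum + sF a (κ + 1) = (M.map (sF a)).sum ∧ card M' < card M := by
  have erase : ∀ {κ : ℕ} {M : Multiset ℕ}, (∀ x ∈ M, x ≤ κ) → κ ∈ M → ∃ M' : Multiset ℕ,
      (∀ x ∈ M', x ≤ κ) ∧ (M'.map (sF a)).sum + sF a κ = (M.map (sF a)).sum ∧ card M' < card M :=
    fun hM hκ => ⟨_, fun x hx => hM x (Multiset.mem_of_mem_erase hx),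
      by rw [add_comm, Multiset.sum_map_erase hκ], Multiset.card_erase_lt_of_mem hκ⟩
  induction κ generalizing M with
  | zero =>
    obtain ⟨p, hp⟩ := exists_succ_mem_of_sum_sF_pos (hle.trans_lt' (by simp [sF]))
    obtain rfl : p = 0 := by have := hM _ hp; omega
    exact erase hM hp
  | succ κ ih =>
    by_cases htop : κ + 2 ∈ M
    · exact erase hM htop
    have hM' : ∀ x ∈ M, x ≤ κ + 1 := fun x hx =>
      Nat.le_of_lt_succ ((hM x hx).lt_of_ne fun h => htop (h ▸ hx))
    -- peel off `a` summands `sF a (κ + 1)`; the remaining `1` comes from splitting one summand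
    have iterate : ∀ n, n * sF a (κ + 1) ≤ (M.map (sF a)).sum → ∃ M' : Multiset ℕ,
        (∀ x ∈ M', x ≤ κ + 1) ∧ (M'.map (sF a)).sum + n * sF a (κ + 1) = (M.map (sF a)).sum ∧
          card M' + n ≤ card M := by
      intro n
      induction n with
      | zero => exact fun _ => ⟨M, hM', by simp, le_rfl⟩
      | succ n ihn =>
        intro hn
        obtain ⟨M₁, hM₁, hs₁, hc₁⟩ := ihn (by rw [add_one_mul] at hn; omega)
        obtain ⟨M₂, hM₂, hs₂, hc₂⟩ := ih hM₁ (by rw [add_one_mul] at hn; omega)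
        exact ⟨M₂, hM₂, by rw [add_one_mul]; omega, by omega⟩
    rw [sF_succ] at hle ⊢
    obtain ⟨M₁, hM₁, hs₁, hc₁⟩ := iterate a (by omega)
    obtain ⟨p, hp⟩ := exists_succ_mem_of_sum_sF_pos (show 0 < (M₁.map (sF a)).sum by omega)
    have hs := sum_map_splitAt (sF_succ a) hp
    have hc := card_splitAt (a := a) hp
    exact ⟨splitAt a p M₁, le_of_mem_splitAt (fun x hx => (hM₁ x hx).trans κ.succ.le_succ) hp,
      by omega, by omega⟩

lemma sum_mul_sF_lt_sF_succ {a k : ℕ} {j : ℕ → ℕ} (hle : ∀ i, 1 ≤ i → i ≤ k → j i ≤ a)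
    (hcarry : ∀ m, 1 ≤ m → m ≤ k → j m = a → ∀ i, 1 ≤ i → i < m → j i = 0) :
    ∑ i ∈ Icc 1 k, j i * sF a i < sF a (k + 1) := by
  induction k with
  | zero => simp [sF]
  | succ k ih =>
    rw [sum_Icc_succ_top (by omega), sF_succ a (k + 1)]
    rcases (hle (k + 1) (by omega) le_rfl).lt_or_eq with hlt | heq
    · have hlow := ih (fun i h₁ h₂ => hle i h₁ (by omega)) (fun m h₁ h₂ => hcarry m h₁ (by omega))
      have := Nat.mul_le_mul_right (sF a (k + 1)) hlt.nat_succ_le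
      rw [Nat.succ_mul] at this
      omega
    · have hlow : ∑ i ∈ Icc 1 k, j i * sF a i = 0 := Finset.sum_eq_zero fun i hi => by
        rw [hcarry (k + 1) (by omega) le_rfl heq i (mem_Icc.1 hi).1 (by simp at hi; omega),
          zero_mul]
      rw [hlow, heq]
      omega

lemma AReduced.sum_mul_sF_lt_sF_succ {a k : ℕ} {j : ℕ → ℕ} (hj : AReduced a k j) {i : ℕ}
    (hi : i ≤ k) : ∑ m ∈ Icc 1 i, j m * sF a m < sF a (i + 1) :=
  _root_.sum_mul_sF_lt_sF_succ (fun m h₁ h₂ => hj.1 m h₁ (h₂.trans hi))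
    (fun m h₁ h₂ => hj.2.2 m h₁ (h₂.trans hi))

theorem sum_le_card_of_sum_map_sF_eq {a k : ℕ} {j : ℕ → ℕ}
    (hj : ∀ i ≤ k, ∑ m ∈ Icc 1 i, j m * sF a m < sF a (i + 1)) {M : Multiset ℕ}
    (hM : (M.map (sF a)).sum = ∑ i ∈ Icc 1 k, j i * sF a i) : ∑ i ∈ Icc 1 k, j i ≤ card M := by
  induction k generalizing M with
  | zero => simp
  | succ k ih =>
    have htop := hj (k + 1) le_rfl
    rw [sum_Icc_succ_top (by omega)] at hM htop ⊢
    set V := ∑ i ∈ Icc 1 k, j i * sF a i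
    suffices key : ∀ n (M : Multiset ℕ), V + n * sF a (k + 1) < sF a (k + 2) →
        (M.map (sF a)).sum = V + n * sF a (k + 1) → ∑ i ∈ Icc 1 k, j i + n ≤ card M from
      key _ M htop hM
    intro n
    induction n with
    | zero => exact fun M _ hM => ih (fun i hi => hj i (by omega)) (by simpa using hM)
    | succ n ihn =>
      intro M hlt hM
      rw [add_one_mul] at hlt hM
      have hbound : ∀ x ∈ M, x ≤ k + 1 := fun x hx => by
        by_contra! hx'
        have h₁ := sF_mono a (show k + 2 ≤ x by omega)
        have h₂ := Multiset.le_sum_of_mem (Multiset.mem_map_of_mem (sF a) hx)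
        omega
      obtain ⟨M', -, hM', hcard⟩ := exists_sum_map_sF_add_sF_eq a k hbound (by omega)
      have := ihn M' (by omega) (by omega)
      omega

lemma exists_multiset_of_mem_Gset {a b c x : ℕ} (hx : x ∈ Gset a b c) :
    ∃ M : Multiset ℕ, (M.map (tF a b c)).sum = x := by
  refine hx {y | ∃ M : Multiset ℕ, (M.map (tF a b c)).sum = y}
    ⟨⟨⟨0, rfl⟩, ?_, ?_⟩, ⟨{0}, by simp [tF, sF]⟩⟩
  · rintro _ ⟨M₁, rfl⟩ _ ⟨M₂, rfl⟩
    exact ⟨M₁ + M₂, by rw [Multiset.map_add, Multiset.sum_add]⟩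
  · rintro _ ⟨M, rfl⟩ hM
    obtain ⟨κ, hκ⟩ := Multiset.exists_mem_of_ne_zero (fun h : M = 0 => hM (by simp [h]))
    refine ⟨(κ + 1) ::ₘ a • M.erase κ, ?_⟩
    rw [Multiset.map_cons, Multiset.sum_cons, Multiset.map_nsmul, Multiset.sum_nsmul,
      smul_eq_mul, tF_succ, ← Multiset.sum_map_erase hκ]
    ring

def IsThetaSG.toAddSubmonoid {a b : ℕ} {S : Set ℕ} (hS : IsThetaSG a b S) : AddSubmonoid ℕ where
  carrier := S
  zero_mem' := hS.1
  add_mem' hx hy := hS.2.1 _ hx _ hy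

lemma IsThetaSG.tF_mem {a b c : ℕ} {S : Set ℕ} (hS : IsThetaSG a b S) (hcS : c ∈ S) (ha : 0 < a)
    (hc : 0 < c) (k : ℕ) : tF a b c k ∈ S := by
  induction k with
  | zero => simpa [tF, sF] using hcS
  | succ k ih => exact tF_succ a b c k ▸ hS.2.2 _ ih (tF_pos b ha hc k).ne'

lemma sum_mul_tF_mem_Gset {a b c : ℕ} (ha : 0 < a) (hc : 0 < c) (s : Finset ℕ) (j : ℕ → ℕ) :
    ∑ i ∈ s, j i * tF a b c i ∈ Gset a b c := by
  rintro S ⟨hS, hcS⟩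
  exact hS.toAddSubmonoid.sum_mem fun i _ => by
    simpa using nsmul_mem (S := hS.toAddSubmonoid) (hS.tF_mem hcS ha hc i) (j i)

lemma le_of_mod_eq_of_le_sub_one {L l c : ℕ} (h : L % c = l % c) (hl : l ≤ c - 1) : l ≤ L := by
  rcases c.eq_zero_or_pos with rfl | hc
  · simpa using h.symm.le
  · rw [← Nat.mod_eq_of_lt (show l < c by omega), ← h]
    exact Nat.mod_le L c

theorem stmt15_general (a b c : ℕ) (ha : 0 < a) (hc : 2 ≤ c)
    (hcop : Nat.gcd b c = 1) (l : ℕ) (hl2 : l ≤ c - 1)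
    (k : ℕ) (j : ℕ → ℕ) (hj : AReduced a k j)
    (hsum : l = ∑ i ∈ Finset.Icc 1 k, j i * sF a i) :
    IsLeast {x : ℕ | x ∈ Gset a b c ∧ x % c = (b * l) % c}
      (∑ i ∈ Finset.Icc 1 k, j i * tF a b c i) := by
  have hxl := sum_mul_tF b c ha (Icc 1 k) j
  rw [← hsum] at hxl
  refine ⟨⟨sum_mul_tF_mem_Gset ha (by omega) _ j, by rw [hxl, Nat.mul_add_mod]⟩, ?_⟩
  rintro _ ⟨hx, hmod⟩
  obtain ⟨M, rfl⟩ := exists_multiset_of_mem_Gset hx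
  rw [sum_map_tF] at hmod ⊢
  rw [Nat.mul_add_mod] at hmod
  have hlL : l ≤ (M.map (sF a)).sum := le_of_mod_eq_of_le_sub_one
    (Nat.ModEq.cancel_left_of_coprime (Nat.gcd_comm c b ▸ hcop) hmod) hl2
  obtain ⟨M₁, hM₁, hpow⟩ := exists_sum_map_sF_add_eq a _ (M := M) (Nat.sub_le _ l)
  replace hM₁ : (M₁.map (sF a)).sum = l := by omega
  have hcard := sum_le_card_of_sum_map_sF_eq (fun i hi => hj.sum_mul_sF_lt_sF_succ hi)
    (hM₁.trans hsum)
  calc ∑ i ∈ Icc 1 k, j i * tF a b c i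
      = c * ((a - 1) * l + ∑ i ∈ Icc 1 k, j i) + b * l := hxl
    _ ≤ c * (M₁.map (a ^ ·)).sum + b * l := by
        rw [sum_map_pow ha, hM₁]
        gcongr
    _ ≤ c * (M.map (a ^ ·)).sum + b * (M.map (sF a)).sum := by
        rw [hpow]
        gcongr

theorem stmt15 (a b c : ℕ) (ha : 0 < a) (hb : 0 < b) (hc : 2 ≤ c)
    (hcop : Nat.gcd b c = 1) (l : ℕ) (hl1 : 1 ≤ l) (hl2 : l ≤ c - 1)
    (k : ℕ) (hk : 1 ≤ k) (j : ℕ → ℕ) (hj : AReduced a k j)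
    (hsum : l = ∑ i ∈ Finset.Icc 1 k, j i * sF a i) :
    IsLeast {x : ℕ | x ∈ Gset a b c ∧ x % c = (b * l) % c}
      (∑ i ∈ Finset.Icc 1 k, j i * tF a b c i) :=
  stmt15_general a b c ha hc hcop l hl2 k j hj hsum
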